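/- If λ = 1, then the derivative of the quadratic functional q vanishes at H ∈ W if and only if the symmetric part in the last two indices agrees with that of K, i.e. H_{abc} + H_{acb} = K_{abc} + K_{acb} for all a,b,c (the totally antisymmetric part of H remaining undetermined); moreover q takes the same value at every such critical point, namely the value q(K). -/

import Mathlib

/-!
For λ = 1 one has `q(H) = B(H, H) - 2 B(H, K)` with `B(X, Y) = ⟨X, G Y⟩`, where `⟨·,·⟩` is the
Minkowski pairing `X^{abc} Y_{abc}` and `G = gradTensor`; `B` is symmetric on `W`. Hence
`dq_H = 2 B(H - K, ·)`, so `H` is critical iff `D = H - K` lies in the radical of `B` on `W`, and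
then `q(H) - q(K) = B(D, D) = 0`. Testing against the basis tensors of `W`, `D` is in the radical
iff `G D` is symmetric in its first two indices. Contracting that condition kills the trace
`D_a{}^b{}_b`; the remaining condition at the three cyclic shifts of `(a, b, c)` forces `D` to be
totally antisymmetric, and a totally antisymmetric `D ∈ W` has `G D = 0`.
-/

open Finset

noncomputable section

abbrev Idx := Fin 4

/-- The Minkowski metric η_{ab} = diag(−1,1,1,1) (which equals its inverse η^{ab}). -/
def ηm (a b : Idx) : ℝ := if a = b then (if a = (0 : Idx) then -1 else 1) else 0

/- Rank-3 tensors H_{abc} (all indices lowered). -/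
abbrev T3 := Idx → Idx → Idx → ℝ

/-- Raising all three indices: H^{abc} = η^{aa'} η^{bb'} η^{cc'} H_{a'b'c'}. -/
def up3 (H : T3) (a b c : Idx) : ℝ :=
  ∑ a', ∑ b', ∑ c', ηm a a' * ηm b b' * ηm c c' * H a' b' c'

/-- Total antisymmetrization H_{[abc]} with weight 1/3!. -/
def asym (H : T3) (a b c : Idx) : ℝ :=
  (H a b c - H a c b + H b c a - H b a c + H c a b - H c b a) / 6

/-- The contraction H^a{}_{ca} (free index c): η^{aa'} H_{a'ca}. -/
def tr1 (H : T3) (c : Idx) : ℝ := ∑ a, ∑ a', ηm a a' * H a' c a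

/-- The contraction H^{cb}{}_b (free index c): η^{cc'} η^{bb'} H_{c'b'b}. -/
def tr2 (H : T3) (c : Idx) : ℝ := ∑ b, ∑ c', ∑ b', ηm c c' * ηm b b' * H c' b' b

/-- The quadratic functional
`q(H) = H^{abc}(H_{cba} − 2K_{cba}) + H^a{}_{ca}(H^{cb}{}_b − 2K^{cb}{}_b)
        + λ H^{[abc]}(H_{[abc]} − 2K_{[abc]})`. -/
def qfun (lam : ℝ) (K H : T3) : ℝ :=
  (∑ a, ∑ b, ∑ c, up3 H a b c * (H c b a - 2 * K c b a))
  + (∑ c, tr1 H c * (tr2 H c - 2 * tr2 K c))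
  + lam * ∑ a, ∑ b, ∑ c,
      up3 (fun x y z => asym H x y z) a b c * (asym H a b c - 2 * asym K a b c)

/-- `W`: the space of rank-3 tensors antisymmetric in their first two indices. -/
def Wsub : Submodule ℝ T3 where
  carrier := {H | ∀ a b c, H a b c = -H b a c}
  add_mem' := by
    intro x y hx hy a b c
    simp only [Pi.add_apply]
    rw [hx a b c, hy a b c]; ring
  zero_mem' := by intro a b c; simp
  smul_mem' := by
    intro r x hx a b c
    simp only [Pi.smul_apply, smul_eq_mul]
    rw [hx a b c]; ring

section QuadraticCritical

variable {𝕜 E : Type*} [NontriviallyNormedField 𝕜] [NormedAddCommGroup E] [NormedSpace 𝕜 E]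
  {B : E →L[𝕜] E →L[𝕜] 𝕜}

theorem hasFDerivAt_apply_self_sub_two_mul (hB : ∀ x y, B x y = B y x) (k h : E) :
    HasFDerivAt (fun x => B x x - 2 * B x k) ((2 : 𝕜) • B (h - k)) h := by
  have hq : HasFDerivAt (fun x => B x x - 2 * B x k) _ h :=
    (B.hasFDerivAt_of_bilinear (hasFDerivAt_id h) (hasFDerivAt_id h)).sub
      ((B.flip k).hasFDerivAt.const_mul 2)
  refine hq.congr_fderiv ?_
  ext v
  simp [hB v]
  ring

theorem fderiv_apply_self_sub_two_mul_eq_zero_iff [CharZero 𝕜] (hB : ∀ x y, B x y = B y x)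
    (k h : E) : fderiv 𝕜 (fun x => B x x - 2 * B x k) h = 0 ↔ B (h - k) = 0 := by
  rw [(hasFDerivAt_apply_self_sub_two_mul hB k h).fderiv]
  refine ⟨fun h0 => ?_, fun h0 => ?_⟩
  · ext v
    simpa using congrArg (fun f => f v) h0
  · ext v
    simp [h0]

theorem apply_self_sub_two_mul_eq_of_apply_sub_eq_zero (hB : ∀ x y, B x y = B y x) {k h : E}
    (hkh : B (h - k) = 0) : B h h - 2 * B h k = B k k - 2 * B k k := by
  have hh : B (h - k) h = 0 := by rw [hkh]; rfl
  have hk : B (h - k) k = 0 := by rw [hkh]; rfl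
  simp only [map_sub, FunLike.coe_sub, Pi.sub_apply] at hh hk
  rw [hB k h] at hh
  linear_combination hh - hk

end QuadraticCritical

def ηd (a : Idx) : ℝ := ηm a a

lemma ηm_eq_ite (a b : Idx) : ηm a b = if a = b then ηd a else 0 := by
  by_cases h : a = b <;> simp [ηm, ηd, h]

lemma ηd_mul_self (a : Idx) : ηd a * ηd a = 1 := by
  by_cases h : a = 0 <;> simp [ηd, ηm, h]

lemma ηd_ne_zero (a : Idx) : ηd a ≠ 0 :=
  left_ne_zero_of_mul_eq_one (ηd_mul_self a)

lemma up3_eq (H : T3) (a b c : Idx) : up3 H a b c = ηd a * ηd b * ηd c * H a b c := by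
  simp [up3, ηm_eq_ite, ite_mul, Finset.sum_ite_eq]

lemma tr1_eq (H : T3) (c : Idx) : tr1 H c = ∑ a, ηd a * H a c a := by
  simp [tr1, ηm_eq_ite, ite_mul, Finset.sum_ite_eq]

/-- `trace23 H a = H_a{}^b{}_b`. -/
def trace23 (H : T3) (a : Idx) : ℝ := ∑ b, ηd b * H a b b

lemma tr2_eq (H : T3) (c : Idx) : tr2 H c = ηd c * trace23 H c := by
  simp [tr2, trace23, ηm_eq_ite, Finset.sum_ite_eq, Finset.mul_sum, mul_comm, mul_left_comm]

/-- `minkInner X Y = X^{abc} Y_{abc}`. -/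
def minkInner : T3 →ₗ[ℝ] T3 →ₗ[ℝ] ℝ :=
  LinearMap.mk₂ ℝ (fun X Y => ∑ a, ∑ b, ∑ c, ηd a * ηd b * ηd c * X a b c * Y a b c)
    (fun X X' Y => by simp only [Pi.add_apply, mul_add, add_mul, Finset.sum_add_distrib])
    (fun r X Y => by simp only [Pi.smul_apply, smul_eq_mul, Finset.mul_sum]; congr! 3; ring)
    (fun X Y Y' => by simp only [Pi.add_apply, mul_add, Finset.sum_add_distrib])
    (fun r X Y => by simp only [Pi.smul_apply, smul_eq_mul, Finset.mul_sum]; congr! 3; ring)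

lemma minkInner_apply (X Y : T3) :
    minkInner X Y = ∑ a, ∑ b, ∑ c, ηd a * ηd b * ηd c * X a b c * Y a b c := rfl

lemma minkInner_comm (X Y : T3) : minkInner X Y = minkInner Y X := by
  simp only [minkInner_apply, mul_right_comm _ (X _ _ _)]

lemma minkInner_asym_comm (X Y : T3) : minkInner X (asym Y) = minkInner (asym X) Y := by
  simp only [minkInner_apply, asym, Fin.sum_univ_four]
  ring

/-- `⟨X, gradTensor Y⟩` polarizes the λ = 1 quadratic part of `q`: its three summands come from
`H^{abc} H_{cba}`, `H^a{}_{ca} H^{cb}{}_b` and `H^{[abc]} H_{[abc]}`. -/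
def gradTensor : T3 →ₗ[ℝ] T3 where
  toFun D a b c := D c b a + (if a = c then ηd a * trace23 D b else 0) + asym D a b c
  map_add' D D' := by
    ext a b c
    simp only [trace23, asym, Pi.add_apply, mul_add, Finset.sum_add_distrib]
    split_ifs <;> ring
  map_smul' r D := by
    ext a b c
    simp only [trace23, asym, Pi.smul_apply, smul_eq_mul, RingHom.id_apply, mul_left_comm _ r,
      ← Finset.mul_sum]
    split_ifs <;> ring

lemma gradTensor_apply (D : T3) (a b c : Idx) :
    gradTensor D a b c = D c b a + (if a = c then ηd a * trace23 D b else 0) + asym D a b c :=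
  rfl

lemma ηd_zero : ηd 0 = -1 := by simp [ηd, ηm]
lemma ηd_one : ηd 1 = 1 := by simp [ηd, ηm]
lemma ηd_two : ηd 2 = 1 := by simp [ηd, ηm]
lemma ηd_three : ηd 3 = 1 := by simp [ηd, ηm]

lemma qfun_one_eq (K H : T3) : qfun 1 K H = minkInner H (gradTensor (H - (2 : ℝ) • K)) := by
  simp only [qfun, minkInner_apply, gradTensor_apply, up3_eq, tr1_eq, tr2_eq, trace23, asym,
    Fin.sum_univ_four, ηd_zero, ηd_one, ηd_two, ηd_three, Pi.sub_apply, Pi.smul_apply, smul_eq_mul,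
    Fin.reduceEq, if_true, if_false]
  ring

lemma minkInner_gradTensor (X Y : T3) :
    minkInner X (gradTensor Y) =
      (∑ a, ∑ b, ∑ c, ηd a * ηd b * ηd c * X a b c * Y c b a)
        + ∑ b, ηd b * (∑ a, ηd a * X a b a) * trace23 Y b + minkInner X (asym Y) := by
  have htrace : ∑ a, ∑ b, ∑ c, ηd a * ηd b * ηd c * X a b c *
      (if a = c then ηd a * trace23 Y b else 0)
        = ∑ b, ηd b * (∑ a, ηd a * X a b a) * trace23 Y b := by
    simp only [mul_ite, mul_zero, Finset.sum_ite_eq, Finset.mem_univ, if_true]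
    rw [Finset.sum_comm]
    refine Finset.sum_congr rfl fun b _ => ?_
    rw [Finset.mul_sum, Finset.sum_mul]
    refine Finset.sum_congr rfl fun a _ => ?_
    linear_combination (ηd a * ηd b * X a b a * trace23 Y b) * ηd_mul_self a
  simp only [minkInner_apply, gradTensor_apply, mul_add, Finset.sum_add_distrib, htrace]

lemma sum_ηd_mul_apply_eq_neg_trace23 {X : T3} (hX : X ∈ Wsub) (b : Idx) :
    ∑ a, ηd a * X a b a = -trace23 X b := by
  simp only [trace23, ← Finset.sum_neg_distrib]
  exact Finset.sum_congr rfl fun a _ => by rw [hX a b a]; ring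

lemma minkInner_gradTensor_comm {X Y : T3} (hX : X ∈ Wsub) (hY : Y ∈ Wsub) :
    minkInner X (gradTensor Y) = minkInner Y (gradTensor X) := by
  have hswap : ∑ a, ∑ b, ∑ c, ηd a * ηd b * ηd c * X a b c * Y c b a
      = ∑ a, ∑ b, ∑ c, ηd a * ηd b * ηd c * Y a b c * X c b a := by
    simp only [Fin.sum_univ_four]
    ring
  simp only [minkInner_gradTensor, sum_ηd_mul_apply_eq_neg_trace23 hX,
    sum_ηd_mul_apply_eq_neg_trace23 hY, hswap, minkInner_asym_comm X, minkInner_comm (asym X),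
    mul_neg, neg_mul, mul_right_comm _ (trace23 X _)]

def qForm : Wsub →L[ℝ] Wsub →L[ℝ] ℝ :=
  ((minkInner.compl₂ gradTensor).compl₁₂ Wsub.subtype Wsub.subtype).toContinuousBilinearMap

lemma qForm_apply (X Y : Wsub) : qForm X Y = minkInner X (gradTensor Y) := rfl

lemma qForm_comm (X Y : Wsub) : qForm X Y = qForm Y X :=
  minkInner_gradTensor_comm X.2 Y.2

lemma qfun_one_eq_qForm (K H : Wsub) : qfun 1 K H = qForm H H - 2 * qForm H K := by
  rw [qfun_one_eq, map_sub, map_smul, map_sub, map_smul, qForm_apply, qForm_apply, smul_eq_mul]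

def unitTensor (i j k : Idx) : T3 := fun a b c => if a = i ∧ b = j ∧ c = k then 1 else 0

lemma minkInner_unitTensor (i j k : Idx) (G : T3) :
    minkInner (unitTensor i j k) G = ηd i * ηd j * ηd k * G i j k := by
  simp only [minkInner_apply, unitTensor, ite_and, mul_ite, ite_mul, mul_one, mul_zero, zero_mul,
    Finset.sum_ite_irrel, Finset.sum_const_zero, Finset.sum_ite_eq', Finset.mem_univ, if_true]

lemma unitTensor_sub_unitTensor_mem (i j k : Idx) :
    unitTensor i j k - unitTensor j i k ∈ Wsub := by
  intro a b c
  simp only [unitTensor, Pi.sub_apply]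
  split_ifs <;> grind

lemma apply_eq_apply_swap_of_forall_minkInner_eq_zero {G : T3}
    (hG : ∀ X ∈ Wsub, minkInner X G = 0) (a b c : Idx) : G a b c = G b a c := by
  have h := hG _ (unitTensor_sub_unitTensor_mem a b c)
  rw [map_sub, LinearMap.sub_apply, minkInner_unitTensor, minkInner_unitTensor,
    mul_comm (ηd b) (ηd a), ← mul_sub] at h
  have hη : ηd a * ηd b * ηd c ≠ 0 := by simp [ηd_ne_zero]
  exact sub_eq_zero.mp ((mul_eq_zero.mp h).resolve_left hη)

lemma asym_apply_self_first_third (D : T3) (a b : Idx) : asym D a b a = 0 := by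
  simp only [asym]; ring

lemma asym_apply_self_second_third (D : T3) (a b : Idx) : asym D b a a = 0 := by
  simp only [asym]; ring

lemma trace23_eq_zero_of_gradTensor_swap {D : T3} (hD : D ∈ Wsub)
    (h : ∀ a b c, gradTensor D a b c = gradTensor D b a c) (b : Idx) : trace23 D b = 0 := by
  have hterm : ∀ a, ηd a * (gradTensor D a b a - gradTensor D b a a) =
      ηd a * D a b a + trace23 D b - ηd a * D a a b
        - (if b = a then ηd b * trace23 D a else 0) * ηd a := by
    intro a
    simp only [gradTensor_apply, asym_apply_self_first_third, asym_apply_self_second_third, if_true]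
    linear_combination trace23 D b * ηd_mul_self a
  have hdiag : ∀ a, D a a b = 0 := fun a => by linarith [hD a a b]
  have hsum := Finset.sum_congr rfl fun a (_ : a ∈ Finset.univ) => hterm a
  simp only [h, sub_self, mul_zero, Finset.sum_const_zero, Finset.sum_sub_distrib,
    Finset.sum_add_distrib, sum_ηd_mul_apply_eq_neg_trace23 hD, hdiag, ite_mul, zero_mul,
    Finset.sum_ite_eq, Finset.mem_univ, if_true, Finset.sum_const, Finset.card_univ,
    Fintype.card_fin, nsmul_eq_mul, Nat.cast_ofNat] at hsum
  linear_combination (-1 / 2) * hsum + trace23 D b / 2 * ηd_mul_self b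

lemma add_apply_eq_zero_of_gradTensor_swap {D : T3} (hD : D ∈ Wsub)
    (h : ∀ a b c, gradTensor D a b c = gradTensor D b a c) (a b c : Idx) :
    D a b c + D a c b = 0 := by
  have hτ := trace23_eq_zero_of_gradTensor_swap hD h
  have hcyc : ∀ a b c, D c b a + asym D a b c = D c a b + asym D b a c := fun a b c => by
    simpa [gradTensor_apply, hτ] using h a b c
  have h₁ := hcyc a b c
  have h₂ := hcyc b c a
  have h₃ := hcyc c a b
  simp only [asym] at h₁ h₂ h₃
  linarith [hD a b c, hD b c a, hD c a b]

lemma gradTensor_eq_zero {D : T3} (hD : D ∈ Wsub) (h : ∀ a b c, D a b c + D a c b = 0) :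
    gradTensor D = 0 := by
  have hτ : ∀ b, trace23 D b = 0 := fun b =>
    Finset.sum_eq_zero fun c _ => by rw [show D b c c = 0 by linarith [h b c c], mul_zero]
  ext a b c
  simp only [gradTensor_apply, hτ, mul_zero, ite_self, add_zero, asym, Pi.zero_apply]
  linarith [hD a b c, hD a c b, hD b c a, h a b c, h b a c, h c b a]

lemma qForm_eq_zero_iff (D : Wsub) :
    qForm D = 0 ↔ ∀ a b c, (D : T3) a b c + (D : T3) a c b = 0 := by
  constructor
  · intro hD
    refine add_apply_eq_zero_of_gradTensor_swap D.2
      (apply_eq_apply_swap_of_forall_minkInner_eq_zero fun X hX => ?_)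
    rw [← qForm_apply ⟨X, hX⟩, qForm_comm, hD, zero_apply]
  · intro hD
    ext X
    rw [zero_apply, qForm_comm, qForm_apply, gradTensor_eq_zero D.2 hD, map_zero]

/-- For λ = 1, the derivative of `q` vanishes at `H ∈ W` iff the part of
`H` symmetric in the last two indices agrees with that of `K`
(`H_{abc} + H_{acb} = K_{abc} + K_{acb}`, the totally antisymmetric part of `H` remaining
undetermined); moreover `q` takes the same value, namely `q(K)`, at every critical point. -/
theorem statement15 (K : Wsub) :
    (∀ H : Wsub, fderiv ℝ (fun H : Wsub => qfun 1 (K : T3) (H : T3)) H = 0 ↔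
      ∀ a b c : Idx, (H : T3) a b c + (H : T3) a c b = (K : T3) a b c + (K : T3) a c b) ∧
    (∀ H : Wsub, fderiv ℝ (fun H : Wsub => qfun 1 (K : T3) (H : T3)) H = 0 →
      qfun 1 (K : T3) (H : T3) = qfun 1 (K : T3) (K : T3)) := by
  have hq : (fun H : Wsub => qfun 1 (K : T3) (H : T3)) = fun H => qForm H H - 2 * qForm H K :=
    funext (qfun_one_eq_qForm K)
  have hcrit : ∀ H : Wsub,
      fderiv ℝ (fun H : Wsub => qfun 1 (K : T3) (H : T3)) H = 0 ↔ qForm (H - K) = 0 := fun H => by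
    rw [hq, fderiv_apply_self_sub_two_mul_eq_zero_iff qForm_comm]
  refine ⟨fun H => ?_, fun H hH => ?_⟩
  · rw [hcrit, qForm_eq_zero_iff]
    simp only [Submodule.coe_sub, Pi.sub_apply]
    exact forall₃_congr fun a b c => by constructor <;> intro h <;> linarith
  · rw [qfun_one_eq_qForm, qfun_one_eq_qForm]
    exact apply_self_sub_two_mul_eq_of_apply_sub_eq_zero qForm_comm ((hcrit H).mp hH)
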